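/- arXiv:1402.6426 — 5 statements merged into one kernel-verified Lean document; each statement's English description precedes it below -/
import Mathlib

section
/- Let X and Y be locally compact Hausdorff spaces and let T : C₀(X,ℂ) → C₀(Y,ℂ) be a surjective linear isometry. Then there exist a homeomorphism φ : Y → X and a continuous function h : Y → ℂ with |h(y)| = 1 for all y ∈ Y such that (Tf)(y) = h(y) · f(φ(y)) for all f ∈ C₀(X,ℂ) and all y ∈ Y. -/
/-!
Precomposition with `T` is a real-linear isometry between the dual spaces, so it maps extreme
points of the dual unit ball to extreme points. A point evaluation `δ_y` is extreme, because `1`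
is an extreme point of the unit disc. Conversely, a nonzero extreme functional `μ` on `C₀(Z, 𝕜)`
satisfies `μ (g • f) = t_g μ f` for every continuous `g : Z → [0, 1]`, since the decomposition
`μ = μ (g • ·) + μ ((1 - g) • ·)` has norms adding up to at most `1`. A compactness argument then
finds a point `x` near which every bump `g` is invisible to `μ`, so that `μ` is a unimodular
multiple of `δ_x`. Thus `δ_y ∘ T = h y • δ_{φ y}`, and peak functions show that `φ` is a
homeomorphism and `h` is continuous.
-/

open ZeroAtInfty Set Filter Topology Metric unitInterval

section ExtremePoints

theorem eq_norm_smul_of_add_eq_of_mem_extremePoints {V : Type*} [NormedAddCommGroup V]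
    [NormedSpace ℝ V] {x y z : V} (hx : x ∈ extremePoints ℝ (closedBall 0 1)) (hyz : y + z = x)
    (hnorm : ‖y‖ + ‖z‖ ≤ 1) : y = ‖y‖ • x := by
  rcases eq_or_ne y 0 with rfl | hy
  · simp
  have : Nontrivial V := ⟨⟨y, 0, hy⟩⟩
  have hx1 : ‖x‖ = 1 := by simpa using extremePoints_closedBall_subset_sphere hx
  rcases eq_or_ne z 0 with rfl | hz
  · rw [add_zero] at hyz
    rw [hyz, hx1, one_smul]
  have hsum : ‖y‖ + ‖z‖ = 1 := le_antisymm hnorm (hx1 ▸ hyz ▸ norm_add_le y z)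
  have hunit : ∀ v : V, v ≠ 0 → ‖v‖⁻¹ • v ∈ closedBall (0 : V) 1 := fun v hv => by
    simp [norm_smul, inv_mul_cancel₀ (norm_ne_zero_iff.2 hv)]
  have hseg : x ∈ openSegment ℝ (‖y‖⁻¹ • y) (‖z‖⁻¹ • z) :=
    ⟨‖y‖, ‖z‖, norm_pos_iff.2 hy, norm_pos_iff.2 hz, hsum, by
      rw [smul_inv_smul₀ (norm_ne_zero_iff.2 hy), smul_inv_smul₀ (norm_ne_zero_iff.2 hz), hyz]⟩
  rw [← (mem_extremePoints_iff_left.1 hx).2 _ (hunit y hy) _ (hunit z hz) hseg,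
    smul_inv_smul₀ (norm_ne_zero_iff.2 hy)]

variable {𝕜 E F : Type*} [RCLike 𝕜] [NormedAddCommGroup E] [NormedSpace 𝕜 E]
  [NormedAddCommGroup F] [NormedSpace 𝕜 F]

theorem norm_comp_add_norm_comp_le {μ : StrongDual 𝕜 E} (hμ : ‖μ‖ ≤ 1) {P Q : E →L[𝕜] E}
    (hPQ : ∀ f g, ‖f‖ ≤ 1 → ‖g‖ ≤ 1 → ‖P f + Q g‖ ≤ 1) :
    ‖μ.comp P‖ + ‖μ.comp Q‖ ≤ 1 := by
  -- rotate `f` and `g` so that both values of `μ` become nonnegative reals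
  have key : ∀ f g, ‖f‖ ≤ 1 → ‖g‖ ≤ 1 → ‖μ (P f)‖ + ‖μ (Q g)‖ ≤ 1 := by
    intro f g hf hg
    obtain ⟨c, hc, hcf⟩ := RCLike.exists_norm_eq_mul_self (μ (P f))
    obtain ⟨d, hd, hdg⟩ := RCLike.exists_norm_eq_mul_self (μ (Q g))
    have hsum : ((‖μ (P f)‖ + ‖μ (Q g)‖ : ℝ) : 𝕜) = μ (P (c • f) + Q (d • g)) := by
      simp [hcf, hdg]
    calc ‖μ (P f)‖ + ‖μ (Q g)‖ = ‖μ (P (c • f) + Q (d • g))‖ := by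
          rw [← hsum, RCLike.norm_ofReal, abs_of_nonneg (by positivity)]
      _ ≤ ‖μ‖ * ‖P (c • f) + Q (d • g)‖ := μ.le_opNorm _
      _ ≤ 1 * 1 := mul_le_mul hμ (hPQ _ _ (by simpa [norm_smul, hc] using hf)
          (by simpa [norm_smul, hd] using hg)) (norm_nonneg _) zero_le_one
      _ = 1 := one_mul 1
  have hP : ∀ g, ‖g‖ ≤ 1 → ‖μ.comp P‖ ≤ 1 - ‖μ (Q g)‖ := fun g hg =>
    ContinuousLinearMap.opNorm_le_of_unit_norm
      (by linarith [key 0 g (by simp) hg, norm_nonneg (μ (P 0))])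
      fun f hf => by rw [ContinuousLinearMap.comp_apply]; linarith [key f g hf.le hg]
  have hQ : ‖μ.comp Q‖ ≤ 1 - ‖μ.comp P‖ :=
    ContinuousLinearMap.opNorm_le_of_unit_norm
      (by linarith [hP 0 (by simp), norm_nonneg (μ (Q 0))])
      fun g hg => by rw [ContinuousLinearMap.comp_apply]; linarith [hP g hg.le]
  linarith

theorem comp_eq_norm_smul_of_mem_extremePoints {μ : StrongDual 𝕜 E}
    (hμ : μ ∈ extremePoints ℝ (closedBall 0 1)) {P Q : E →L[𝕜] E} (hPQ : P + Q = 1)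
    (hsplit : ∀ f g, ‖f‖ ≤ 1 → ‖g‖ ≤ 1 → ‖P f + Q g‖ ≤ 1) :
    μ.comp P = ‖μ.comp P‖ • μ :=
  eq_norm_smul_of_add_eq_of_mem_extremePoints hμ
    (by rw [← ContinuousLinearMap.comp_add, hPQ]; rfl)
    (norm_comp_add_norm_comp_le (mem_closedBall_zero_iff.1 (extremePoints_subset hμ)) hsplit)

theorem comp_linearIsometryEquiv_mem_extremePoints (e : E ≃ₗᵢ[𝕜] F) {ν : StrongDual 𝕜 F}
    (hν : ν ∈ extremePoints ℝ (closedBall 0 1)) :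
    ν.comp (e : E →L[𝕜] F) ∈ extremePoints ℝ (closedBall (0 : StrongDual 𝕜 E) 1) := by
  let L : StrongDual 𝕜 F ≃ₗ[ℝ] StrongDual 𝕜 E :=
    ((ContinuousLinearEquiv.arrowCongr e.symm.toContinuousLinearEquiv
      (.refl 𝕜 𝕜)).toLinearEquiv.restrictScalars ℝ)
  have hball : L '' closedBall 0 1 = closedBall 0 1 := by
    ext μ
    rw [LinearEquiv.image_eq_preimage_symm]
    simp only [L, LinearEquiv.restrictScalars_symm_apply, mem_preimage, mem_closedBall_zero_iff]
    show ‖μ.comp (e.symm : F →L[𝕜] E)‖ ≤ 1 ↔ ‖μ‖ ≤ 1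
    rw [ContinuousLinearMap.opNorm_comp_linearIsometryEquiv]
  rw [← hball, ← image_extremePoints]
  exact ⟨ν, hν, rfl⟩

end ExtremePoints

def ContinuousMap.unitIntervalSymm {Z : Type*} [TopologicalSpace Z] (g : C(Z, I)) : C(Z, I) :=
  ⟨fun z => σ (g z), continuous_symm.comp g.continuous⟩

@[simp] lemma ContinuousMap.unitIntervalSymm_apply {Z : Type*} [TopologicalSpace Z]
    (g : C(Z, I)) (z : Z) : g.unitIntervalSymm z = σ (g z) := rfl

namespace ZeroAtInftyContinuousMap

variable {Z : Type*} [TopologicalSpace Z]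

lemma norm_coe_le_norm {β : Type*} [SeminormedAddCommGroup β] (f : C₀(Z, β)) (z : Z) :
    ‖f z‖ ≤ ‖f‖ :=
  f.toBCF.norm_coe_le_norm z

lemma norm_le {β : Type*} [SeminormedAddCommGroup β] {f : C₀(Z, β)} {C : ℝ} (hC : 0 ≤ C) :
    ‖f‖ ≤ C ↔ ∀ z, ‖f z‖ ≤ C := by
  rw [← norm_toBCF_eq_norm, BoundedContinuousFunction.norm_le hC]
  rfl

lemma isCompact_setOf_le_norm {β : Type*} [SeminormedAddCommGroup β] (f : C₀(Z, β)) {ε : ℝ}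
    (hε : 0 < ε) : IsCompact {z | ε ≤ ‖f z‖} := by
  obtain ⟨K, hK, hKf⟩ := mem_cocompact.1
    ((tendsto_zero_iff_norm_tendsto_zero.1 (zero_at_infty f)).eventually (gt_mem_nhds hε))
  refine hK.of_isClosed_subset (isClosed_le continuous_const (map_continuous f).norm) fun z hz => ?_
  by_contra hzK
  exact (hKf hzK).not_ge (by simpa using hz)

variable (𝕜 : Type*) [RCLike 𝕜]

noncomputable def evalCLM (x : Z) : StrongDual 𝕜 C₀(Z, 𝕜) :=
  LinearMap.mkContinuous
    { toFun := fun f => f x, map_add' := fun _ _ => rfl, map_smul' := fun _ _ => rfl } 1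
    fun f => by simpa using norm_coe_le_norm f x

@[simp] lemma evalCLM_apply (x : Z) (f : C₀(Z, 𝕜)) : evalCLM 𝕜 x f = f x := rfl

lemma norm_evalCLM_le (x : Z) : ‖evalCLM 𝕜 x‖ ≤ 1 :=
  LinearMap.mkContinuous_norm_le _ zero_le_one _

variable {𝕜}

noncomputable def mulCLM : C(Z, I) →*₀ (C₀(Z, 𝕜) →L[𝕜] C₀(Z, 𝕜)) where
  toFun g := LinearMap.mkContinuous
    { toFun := fun f =>
        { toFun := fun z => ((g z : ℝ) : 𝕜) * f z
          continuous_toFun := by fun_prop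
          zero_at_infty' := by
            refine squeeze_zero_norm (fun z => ?_)
              (tendsto_zero_iff_norm_tendsto_zero.1 (zero_at_infty f))
            rw [norm_mul, RCLike.norm_ofReal, abs_of_nonneg (g z).2.1]
            exact mul_le_of_le_one_left (norm_nonneg _) (g z).2.2 }
      map_add' := fun _ _ => by ext; simp [mul_add]
      map_smul' := fun _ _ => by ext; simp [mul_left_comm] } 1
    fun f => (norm_le (by positivity)).2 fun z => calc
      _ = g z * ‖f z‖ := by simp [abs_of_nonneg (g z).2.1]
      _ ≤ 1 * ‖f‖ := mul_le_mul (g z).2.2 (norm_coe_le_norm f z) (norm_nonneg _) zero_le_one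
  map_zero' := by ext; simp
  map_one' := by ext; simp
  map_mul' _ _ := by ext; simp [mul_assoc]

@[simp] lemma mulCLM_apply (g : C(Z, I)) (f : C₀(Z, 𝕜)) (z : Z) :
    mulCLM g f z = ((g z : ℝ) : 𝕜) * f z := rfl

lemma norm_mulCLM_apply (g : C(Z, I)) (f : C₀(Z, 𝕜)) (z : Z) :
    ‖mulCLM g f z‖ = g z * ‖f z‖ := by
  rw [mulCLM_apply, norm_mul, RCLike.norm_ofReal, abs_of_nonneg (g z).2.1]

lemma norm_mulCLM_apply_le (g : C(Z, I)) (f : C₀(Z, 𝕜)) (z : Z) : ‖mulCLM g f z‖ ≤ ‖f z‖ :=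
  (norm_mulCLM_apply g f z).trans_le (mul_le_of_le_one_left (norm_nonneg _) (g z).2.2)

lemma mulCLM_add_mulCLM_unitIntervalSymm (g : C(Z, I)) :
    mulCLM g + mulCLM g.unitIntervalSymm = (1 : C₀(Z, 𝕜) →L[𝕜] C₀(Z, 𝕜)) := by
  ext f z
  simp [coe_symm_eq, ← add_mul]

lemma comp_mulCLM_add_comp_mulCLM_unitIntervalSymm (ν : StrongDual 𝕜 C₀(Z, 𝕜)) (g : C(Z, I)) :
    ν.comp (mulCLM g) + ν.comp (mulCLM g.unitIntervalSymm) = ν := by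
  rw [← ContinuousLinearMap.comp_add, mulCLM_add_mulCLM_unitIntervalSymm]
  rfl

lemma norm_mulCLM_add_mulCLM_unitIntervalSymm_le (g : C(Z, I)) {f₁ f₂ : C₀(Z, 𝕜)}
    (h₁ : ‖f₁‖ ≤ 1) (h₂ : ‖f₂‖ ≤ 1) : ‖mulCLM g f₁ + mulCLM g.unitIntervalSymm f₂‖ ≤ 1 := by
  refine (norm_le zero_le_one).2 fun z => ?_
  have hf₁ := (norm_coe_le_norm f₁ z).trans h₁
  have hf₂ := (norm_coe_le_norm f₂ z).trans h₂
  calc ‖mulCLM g f₁ z + mulCLM g.unitIntervalSymm f₂ z‖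
      ≤ g z * ‖f₁ z‖ + σ (g z) * ‖f₂ z‖ := by
        refine (norm_add_le _ _).trans_eq ?_
        rw [norm_mulCLM_apply, norm_mulCLM_apply, ContinuousMap.unitIntervalSymm_apply]
    _ ≤ g z * 1 + σ (g z) * 1 := by gcongr <;> first | exact (g z).2.1 | exact (σ (g z)).2.1
    _ = 1 := by rw [coe_symm_eq]; ring

theorem comp_mulCLM_eq_norm_smul {μ : StrongDual 𝕜 C₀(Z, 𝕜)}
    (hμ : μ ∈ extremePoints ℝ (closedBall 0 1)) (g : C(Z, I)) :
    μ.comp (mulCLM g) = ‖μ.comp (mulCLM g)‖ • μ :=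
  comp_eq_norm_smul_of_mem_extremePoints hμ (mulCLM_add_mulCLM_unitIntervalSymm g)
    fun _ _ => norm_mulCLM_add_mulCLM_unitIntervalSymm_le g

theorem exists_forall_eventuallyEq_one_comp_mulCLM_ne_zero {μ : StrongDual 𝕜 C₀(Z, 𝕜)}
    (hμ : μ ≠ 0) : ∃ x, ∀ g : C(Z, I), g =ᶠ[𝓝 x] 1 → μ.comp (mulCLM g) ≠ 0 := by
  by_contra! h
  choose g hg1 hg0 using h
  obtain ⟨f, hf⟩ : ∃ f, μ f ≠ 0 := by
    by_contra! h
    exact hμ (ContinuousLinearMap.ext h)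
  have hμpos : 0 < ‖μ‖ := (norm_pos_iff (E := StrongDual 𝕜 C₀(Z, 𝕜))).2 hμ
  have hc : 0 < ‖μ f‖ / (2 * ‖μ‖) := by have := norm_pos_iff.2 hf; positivity
  set c := ‖μ f‖ / (2 * ‖μ‖) with hc_def
  obtain ⟨s, -, hs⟩ := (isCompact_setOf_le_norm f hc).elim_nhds_subcover
    (fun x => {z | g x z = 1}) fun x _ => hg1 x
  -- `H` vanishes where `f` is large, yet `μ` does not see the multiplication by `H`
  set H := ∏ x ∈ s, (g x).unitIntervalSymm
  have hH : μ.comp (mulCLM H) = μ :=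
    Finset.prod_induction _ (fun H => μ.comp (mulCLM H) = μ)
      (fun a b ha hb => by
        rw [map_mul, ContinuousLinearMap.mul_def, ← ContinuousLinearMap.comp_assoc, ha, hb])
      (by rw [map_one]; rfl)
      fun x _ => by simpa [hg0 x] using comp_mulCLM_add_comp_mulCLM_unitIntervalSymm μ (g x)
  have hsmall : ‖mulCLM H f‖ ≤ c := by
    refine (norm_le hc.le).2 fun z => ?_
    by_cases hz : c ≤ ‖f z‖
    · obtain ⟨x, hx, hxz⟩ := mem_iUnion₂.1 (hs hz)
      have hHz : H z = 0 := by
        rw [ContinuousMap.coe_prod, Finset.prod_apply]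
        exact Finset.prod_eq_zero hx (by simp [show g x z = 1 from hxz])
      simp [hHz, hc.le]
    · exact (norm_mulCLM_apply_le H f z).trans (not_le.1 hz).le
  have : ‖μ f‖ ≤ ‖μ f‖ / 2 := calc
    ‖μ f‖ = ‖μ (mulCLM H f)‖ := by rw [← ContinuousLinearMap.comp_apply, hH]
    _ ≤ ‖μ‖ * c := (μ.le_opNorm _).trans (by gcongr)
    _ = ‖μ f‖ / 2 := by rw [hc_def]; field_simp
  linarith [norm_pos_iff.2 hf]

section LocallyCompact

variable [LocallyCompactSpace Z] [T2Space Z]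

theorem exists_unitInterval_bump {x : Z} {V : Set Z} (hV : V ∈ 𝓝 x) :
    ∃ g : C(Z, I), HasCompactSupport g ∧ g =ᶠ[𝓝 x] 1 ∧ ∀ z ∉ V, g z = 0 := by
  obtain ⟨K, hK, hxK, hKV⟩ := exists_compact_subset isOpen_interior (mem_interior_iff_mem_nhds.2 hV)
  obtain ⟨g, hg1, hg0, hgc, hgI⟩ := exists_continuous_one_zero_of_isCompact hK
    isOpen_interior.isClosed_compl (disjoint_compl_right_iff_subset.2 hKV)
  refine ⟨⟨fun z => ⟨g z, hgI z⟩, by fun_prop⟩, ?_, ?_, fun z hz => ?_⟩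
  · exact hgc.mono fun z hz h => hz (Subtype.ext h)
  · filter_upwards [mem_interior_iff_mem_nhds.1 hxK] with z hz
    exact Subtype.ext (hg1 hz)
  · exact Subtype.ext (hg0 fun h => hz (interior_subset h))

theorem exists_peak {x : Z} {V : Set Z} (hV : V ∈ 𝓝 x) :
    ∃ e : C₀(Z, 𝕜), ‖e‖ ≤ 1 ∧ e =ᶠ[𝓝 x] 1 ∧ ∀ z ∉ V, e z = 0 := by
  obtain ⟨g, hgc, hg1, hg0⟩ := exists_unitInterval_bump hV
  let e : C₀(Z, 𝕜) := ⟨⟨fun z => ((g z : ℝ) : 𝕜), by fun_prop⟩,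
    (hgc.comp_left (g := fun t : I => ((t : ℝ) : 𝕜)) (by simp)).is_zero_at_infty⟩
  refine ⟨e, (norm_le zero_le_one).2 fun z => ?_, ?_, fun z hz => ?_⟩
  · simp [e, abs_of_nonneg (g z).2.1, (g z).2.2]
  · filter_upwards [hg1] with z hz
    simp [e, hz]
  · simp [e, hg0 z hz]

theorem eq_smul_evalCLM_of_comp_mulCLM_unitIntervalSymm_eq_zero {ν : StrongDual 𝕜 C₀(Z, 𝕜)}
    {x : Z} (hν : ∀ g : C(Z, I), g =ᶠ[𝓝 x] 1 → ν.comp (mulCLM g.unitIntervalSymm) = 0)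
    {e : C₀(Z, 𝕜)} (he : e x = 1) : ν = ν e • evalCLM 𝕜 x := by
  have hvanish : ∀ f : C₀(Z, 𝕜), f x = 0 → ν f = 0 := by
    intro f hfx
    refine norm_le_zero_iff.1 (le_of_forall_pos_le_add fun ε hε => ?_)
    set δ := ε / (‖ν‖ + 1)
    have hδ : 0 < δ := by positivity
    obtain ⟨g, -, hg1, hg0⟩ := exists_unitInterval_bump
      ((isOpen_lt (map_continuous f).norm continuous_const).mem_nhds (by simpa [hfx] : ‖f x‖ < δ))
    have hνg : ν.comp (mulCLM g) = ν := by
      simpa [hν g hg1] using comp_mulCLM_add_comp_mulCLM_unitIntervalSymm ν g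
    have hsmall : ‖mulCLM g f‖ ≤ δ := by
      refine (norm_le hδ.le).2 fun z => ?_
      by_cases hz : ‖f z‖ < δ
      · exact (norm_mulCLM_apply_le g f z).trans hz.le
      · simp [hg0 z hz, hδ.le]
    calc ‖ν f‖ = ‖ν (mulCLM g f)‖ := by rw [← ContinuousLinearMap.comp_apply, hνg]
      _ ≤ ‖ν‖ * δ := (ν.le_opNorm _).trans (by gcongr)
      _ ≤ 0 + ε := by
        rw [zero_add, mul_div_assoc', div_le_iff₀ (by positivity)]
        nlinarith
  ext f
  have := hvanish (f - f x • e) (by simp [he])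
  rw [map_sub, map_smul, sub_eq_zero] at this
  simp [this, mul_comm]

theorem evalCLM_mem_extremePoints (y : Z) :
    evalCLM 𝕜 y ∈ extremePoints ℝ (closedBall (0 : StrongDual 𝕜 C₀(Z, 𝕜)) 1) := by
  refine mem_extremePoints_iff_left.2
    ⟨(mem_closedBall_zero_iff (E := StrongDual 𝕜 C₀(Z, 𝕜))).2 (norm_evalCLM_le 𝕜 y),
      fun α hα β hβ ⟨a, b, ha, hb, hab, hαβ⟩ => ?_⟩
  replace hα := (mem_closedBall_zero_iff (E := StrongDual 𝕜 C₀(Z, 𝕜))).1 hα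
  replace hβ := (mem_closedBall_zero_iff (E := StrongDual 𝕜 C₀(Z, 𝕜))).1 hβ
  -- `1` is an extreme point of the closed unit disc of `𝕜`
  have hpeak : ∀ f : C₀(Z, 𝕜), ‖f‖ ≤ 1 → f y = 1 → α f = 1 := fun f hf hfy =>
    (mem_extremePoints_iff_left.1 (StrictConvexSpace.sphere_subset_extremePoints_closedBall
      (0 : 𝕜) one_ne_zero (by simp))).2 (α f)
      (mem_closedBall_zero_iff.2 ((α.le_opNorm f).trans (mul_le_one₀ hα (norm_nonneg _) hf))) (β f)
      (mem_closedBall_zero_iff.2 ((β.le_opNorm f).trans (mul_le_one₀ hβ (norm_nonneg _) hf)))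
      ⟨a, b, ha, hb, hab, by simpa [hfy] using congr($hαβ f)⟩
  obtain ⟨e, he, he1, -⟩ := exists_peak (𝕜 := 𝕜) (univ_mem (f := 𝓝 y))
  rw [eq_smul_evalCLM_of_comp_mulCLM_unitIntervalSymm_eq_zero (ν := α) (fun g hg => ?_)
    he1.self_of_nhds, hpeak e he he1.self_of_nhds, one_smul]
  have hzero : ∀ f : C₀(Z, 𝕜), ‖f‖ ≤ 1 → α (mulCLM g.unitIntervalSymm f) = 0 := by
    intro f hf
    have hu : ∀ c : 𝕜, ‖c‖ = 1 → α (mulCLM g e) + c * α (mulCLM g.unitIntervalSymm f) = 1 := by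
      intro c hc
      simpa using hpeak (mulCLM g e + mulCLM g.unitIntervalSymm (c • f))
        (norm_mulCLM_add_mulCLM_unitIntervalSymm_le g he (by simpa [norm_smul, hc] using hf))
        (by simp [hg.self_of_nhds, he1.self_of_nhds])
    linear_combination (hu 1 (by simp) - hu (-1) (by simp)) / 2
  have : ‖α.comp (mulCLM g.unitIntervalSymm)‖ ≤ 0 :=
    ContinuousLinearMap.opNorm_le_of_unit_norm le_rfl fun f hf => by
      rw [ContinuousLinearMap.comp_apply, hzero f hf.le, norm_zero]
  exact (norm_le_zero_iff (E := C₀(Z, 𝕜) →L[𝕜] 𝕜)).1 this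

theorem comp_mulCLM_unitIntervalSymm_eq_zero {μ : StrongDual 𝕜 C₀(Z, 𝕜)}
    (hμ : μ ∈ extremePoints ℝ (closedBall 0 1)) {x : Z}
    (hx : ∀ g : C(Z, I), g =ᶠ[𝓝 x] 1 → μ.comp (mulCLM g) ≠ 0) {g : C(Z, I)}
    (hg : g =ᶠ[𝓝 x] 1) : μ.comp (mulCLM g.unitIntervalSymm) = 0 := by
  obtain ⟨b, -, hb1, hb0⟩ := exists_unitInterval_bump hg
  have hprod : b * g.unitIntervalSymm = 0 := by
    ext z
    by_cases hz : g z = 1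
    · simp [hz]
    · simp [hb0 z hz]
  have hbne : ‖μ.comp (mulCLM b)‖ ≠ 0 :=
    (norm_ne_zero_iff (E := C₀(Z, 𝕜) →L[𝕜] 𝕜)).2 (hx b hb1)
  have : ‖μ.comp (mulCLM b)‖ • μ.comp (mulCLM g.unitIntervalSymm) = 0 := by
    rw [← ContinuousLinearMap.smul_comp, ← comp_mulCLM_eq_norm_smul hμ b,
      ContinuousLinearMap.comp_assoc, ← ContinuousLinearMap.mul_def, ← map_mul, hprod, map_zero,
      ContinuousLinearMap.comp_zero]
  exact (smul_eq_zero.1 this).resolve_left hbne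

theorem exists_eq_smul_evalCLM_of_mem_extremePoints {μ : StrongDual 𝕜 C₀(Z, 𝕜)}
    (hμ : μ ∈ extremePoints ℝ (closedBall 0 1)) (hμ0 : μ ≠ 0) :
    ∃ (x : Z) (c : 𝕜), ‖c‖ = 1 ∧ μ = c • evalCLM 𝕜 x := by
  obtain ⟨x, hx⟩ := exists_forall_eventuallyEq_one_comp_mulCLM_ne_zero hμ0
  obtain ⟨e, he, he1, -⟩ := exists_peak (𝕜 := 𝕜) (univ_mem (f := 𝓝 x))
  have hrep := eq_smul_evalCLM_of_comp_mulCLM_unitIntervalSymm_eq_zero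
    (fun g hg => comp_mulCLM_unitIntervalSymm_eq_zero hμ hx hg) he1.self_of_nhds
  have : Nontrivial (StrongDual 𝕜 C₀(Z, 𝕜)) := ⟨⟨μ, 0, hμ0⟩⟩
  have hμ1 : ‖μ‖ = 1 := (mem_sphere_zero_iff_norm (E := StrongDual 𝕜 C₀(Z, 𝕜))).1
    (extremePoints_closedBall_subset_sphere (A := StrongDual 𝕜 C₀(Z, 𝕜)) hμ)
  refine ⟨x, μ e, le_antisymm ?_ ?_, hrep⟩
  · calc ‖μ e‖ ≤ ‖μ‖ * ‖e‖ := μ.le_opNorm e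
      _ ≤ 1 := by rw [hμ1, one_mul]; exact he
  · calc 1 = ‖μ e • evalCLM 𝕜 x‖ := hμ1.symm.trans (congrArg norm hrep)
      _ ≤ ‖μ e‖ * ‖evalCLM 𝕜 x‖ := ContinuousLinearMap.opNorm_smul_le _ _
      _ ≤ ‖μ e‖ := mul_le_of_le_one_right (norm_nonneg _) (norm_evalCLM_le 𝕜 x)

end LocallyCompact

section WeightedComposition

variable {𝕜 W : Type*} [RCLike 𝕜] [TopologicalSpace W]

def IsWeightedComp (E : C₀(Z, 𝕜) → C₀(W, 𝕜)) (h : W → 𝕜) (φ : W → Z) : Prop :=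
  ∀ f w, E f w = h w * f (φ w)

theorem exists_isWeightedComp [LocallyCompactSpace Z] [T2Space Z] [LocallyCompactSpace W]
    [T2Space W] (E : C₀(Z, 𝕜) ≃ₗᵢ[𝕜] C₀(W, 𝕜)) :
    ∃ (h : W → 𝕜) (φ : W → Z), (∀ w, ‖h w‖ = 1) ∧ IsWeightedComp E h φ := by
  have hext : ∀ w, (evalCLM 𝕜 w).comp (E : C₀(Z, 𝕜) →L[𝕜] C₀(W, 𝕜)) ∈
      extremePoints ℝ (closedBall 0 1) := fun w =>
    comp_linearIsometryEquiv_mem_extremePoints E (evalCLM_mem_extremePoints w)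
  have hne : ∀ w, (evalCLM 𝕜 w).comp (E : C₀(Z, 𝕜) →L[𝕜] C₀(W, 𝕜)) ≠ 0 := by
    intro w h0
    obtain ⟨p, -, hp, -⟩ := exists_peak (𝕜 := 𝕜) (univ_mem (f := 𝓝 w))
    simpa [hp.self_of_nhds] using congr($h0 (E.symm p))
  choose φ h hh hrep using fun w => exists_eq_smul_evalCLM_of_mem_extremePoints (hext w) (hne w)
  exact ⟨h, φ, hh, fun f w => by simpa using congr($(hrep w) f)⟩

variable {E : C₀(Z, 𝕜) → C₀(W, 𝕜)} {h : W → 𝕜} {φ : W → Z}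

theorem IsWeightedComp.leftInverse [LocallyCompactSpace W] [T2Space W]
    {F : C₀(W, 𝕜) → C₀(Z, 𝕜)} {k : Z → 𝕜} {ψ : Z → W} (hE : IsWeightedComp E h φ)
    (hF : IsWeightedComp F k ψ) (hEF : Function.RightInverse F E) :
    Function.LeftInverse ψ φ := by
  intro w
  by_contra hne
  obtain ⟨p, -, hp, hp0⟩ := exists_peak (𝕜 := 𝕜)
    (isClosed_singleton.isOpen_compl.mem_nhds (Ne.symm hne) : {ψ (φ w)}ᶜ ∈ 𝓝 w)
  have := congr($(hEF p) w)
  rw [hE, hF, hp0 _ (by simp), mul_zero, mul_zero, hp.self_of_nhds] at this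
  exact zero_ne_one this

theorem IsWeightedComp.continuous [LocallyCompactSpace Z] [T2Space Z]
    (hE : IsWeightedComp E h φ) (hh : ∀ w, h w ≠ 0) : Continuous φ := by
  refine continuous_iff_continuousAt.2 fun w V hV => ?_
  obtain ⟨f, -, hf1, hf0⟩ := exists_peak (𝕜 := 𝕜) hV
  rw [Filter.mem_map]
  have hw : E f w ≠ 0 := by simpa [hE f w, hf1.self_of_nhds] using hh w
  filter_upwards [(isOpen_ne_fun (map_continuous (E f)) continuous_const).mem_nhds hw]
    with w' hw'
  by_contra hV'
  exact hw' (by rw [hE, hf0 _ hV', mul_zero])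

theorem IsWeightedComp.continuous_weight [LocallyCompactSpace Z] [T2Space Z]
    (hE : IsWeightedComp E h φ) (hφ : Continuous φ) : Continuous h := by
  refine continuous_iff_continuousAt.2 fun w => ?_
  obtain ⟨e, -, he1, -⟩ := exists_peak (𝕜 := 𝕜) (univ_mem (f := 𝓝 (φ w)))
  refine (map_continuous (E e)).continuousAt.congr ?_
  filter_upwards [hφ.continuousAt.eventually he1] with w' hw'
  rw [hE, hw', Pi.one_apply, mul_one]

end WeightedComposition

end ZeroAtInftyContinuousMap

open ZeroAtInftyContinuousMap

/-- Banach–Stone theorem: every surjective linear isometry between `C₀(X, ℂ)` and `C₀(Y, ℂ)`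
is a weighted composition operator with unimodular continuous weight and a homeomorphism. -/
theorem banach_stone_C0_complex {X Y : Type*}
    [TopologicalSpace X] [LocallyCompactSpace X] [T2Space X]
    [TopologicalSpace Y] [LocallyCompactSpace Y] [T2Space Y]
    (T : C₀(X, ℂ) →ₗᵢ[ℂ] C₀(Y, ℂ)) (hT : Function.Surjective T) :
    ∃ (φ : Y ≃ₜ X) (h : C(Y, ℂ)), (∀ y : Y, ‖h y‖ = 1) ∧
      ∀ (f : C₀(X, ℂ)) (y : Y), T f y = h y * f (φ y) := by
  let E := LinearIsometryEquiv.ofSurjective T hT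
  obtain ⟨h, φ, hh, hφ⟩ := exists_isWeightedComp E
  obtain ⟨k, ψ, hk, hψ⟩ := exists_isWeightedComp E.symm
  have hφc : Continuous φ := hφ.continuous fun y => norm_ne_zero_iff.1 (by simp [hh y])
  have hψc : Continuous ψ := hψ.continuous fun x => norm_ne_zero_iff.1 (by simp [hk x])
  exact ⟨{ toFun := φ, invFun := ψ
           left_inv := hφ.leftInverse hψ E.apply_symm_apply
           right_inv := hψ.leftInverse hφ E.symm_apply_apply
           continuous_toFun := hφc
           continuous_invFun := hψc },
    ⟨h, hφ.continuous_weight hφc⟩, hh, hφ⟩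
end

section
/- Let X and Y be locally compact Hausdorff spaces, let E and F be real Banach spaces, let φ : Y → X be a continuous proper map (i.e., preimages of compact sets are compact), and for each y ∈ Y let h_y : E → F be a bounded linear operator such that sup_{y∈Y} ‖h_y‖ < ∞ and the family (h_y) is SOT-continuous on Y. Then for every f ∈ C₀(X,E), the function y ↦ h_y(f(φ(y))) belongs to C₀(Y,F); consequently the formula (Tf)(y) = h_y(f(φ(y))) defines a bounded linear operator T : C₀(X,E) → C₀(Y,F). -/
open ZeroAtInfty Filter Topology

section aux

variable {X Y E F : Type*}
    [TopologicalSpace X] [TopologicalSpace Y]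
    [NormedAddCommGroup E] [NormedSpace ℝ E]
    [NormedAddCommGroup F] [NormedSpace ℝ F]

lemma wc_continuous (φ : Y → X) (hφ : Continuous φ)
    (h : Y → (E →L[ℝ] F)) (C : ℝ) (hbd : ∀ y : Y, ‖h y‖ ≤ C)
    (hc : ∀ e : E, Continuous fun y : Y => h y e) (f : C₀(X, E)) :
    Continuous fun y : Y => h y (f (φ y)) := by
  rw [continuous_iff_continuousAt]
  intro y₀
  have key : ∀ y : Y, h y (f (φ y)) =
      h y (f (φ y) - f (φ y₀)) + h y (f (φ y₀)) := by
    intro y; rw [map_sub]; abel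
  have hB : Tendsto (fun y => h y (f (φ y₀))) (𝓝 y₀) (𝓝 (h y₀ (f (φ y₀)))) :=
    (hc (f (φ y₀))).tendsto y₀
  have hA : Tendsto (fun y => h y (f (φ y) - f (φ y₀))) (𝓝 y₀) (𝓝 0) := by
    have hbound : ∀ y, ‖h y (f (φ y) - f (φ y₀))‖ ≤ (max C 0) * ‖f (φ y) - f (φ y₀)‖ := by
      intro y
      calc ‖h y (f (φ y) - f (φ y₀))‖ ≤ ‖h y‖ * ‖f (φ y) - f (φ y₀)‖ := (h y).le_opNorm _
        _ ≤ (max C 0) * ‖f (φ y) - f (φ y₀)‖ :=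
          mul_le_mul_of_nonneg_right ((hbd y).trans (le_max_left _ _)) (norm_nonneg _)
    apply squeeze_zero_norm hbound
    have : Tendsto (fun y => ‖f (φ y) - f (φ y₀)‖) (𝓝 y₀) (𝓝 ‖f (φ y₀) - f (φ y₀)‖) := by
      exact (((map_continuous f).comp hφ).sub continuous_const).norm.tendsto y₀
    simp only [sub_self, norm_zero] at this
    simpa using this.const_mul (max C 0)
  have htot := hA.add hB
  rw [zero_add] at htot
  exact htot.congr (fun y => (key y).symm)

lemma wc_zero_at_infty (φ : Y → X)
    (hproper : ∀ K : Set X, IsCompact K → IsCompact (φ ⁻¹' K))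
    (h : Y → (E →L[ℝ] F)) (C : ℝ) (hbd : ∀ y : Y, ‖h y‖ ≤ C)
    (f : C₀(X, E)) :
    Tendsto (fun y : Y => h y (f (φ y))) (cocompact Y) (𝓝 0) := by
  have hφc : Tendsto φ (cocompact Y) (cocompact X) := by
    rw [hasBasis_cocompact.tendsto_right_iff]
    intro K hK
    rw [eventually_iff, mem_cocompact]
    exact ⟨φ ⁻¹' K, hproper K hK, by intro y hy; simpa using hy⟩
  have hf : Tendsto (fun y => f (φ y)) (cocompact Y) (𝓝 0) :=
    (zero_at_infty f).comp hφc
  have hbound : ∀ y, ‖h y (f (φ y))‖ ≤ (max C 0) * ‖f (φ y)‖ := fun y =>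
    ((h y).le_opNorm _).trans
      (mul_le_mul_of_nonneg_right ((hbd y).trans (le_max_left _ _)) (norm_nonneg _))
  apply squeeze_zero_norm hbound
  have : Tendsto (fun y => ‖f (φ y)‖) (cocompact Y) (𝓝 0) := by
    simpa using hf.norm
  simpa using this.const_mul (max C 0)

end aux

/-- A continuous proper map `φ : Y → X` together with a uniformly bounded SOT-continuous
family of bounded linear operators `h y : E →L F` induces a bounded linear operator
`T : C₀(X, E) → C₀(Y, F)` via `(T f) y = h y (f (φ y))`; in particular, for every
`f ∈ C₀(X, E)` the function `y ↦ h y (f (φ y))` belongs to `C₀(Y, F)`. -/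
theorem weighted_composition_bounded {X Y E F : Type*}
    [TopologicalSpace X] [LocallyCompactSpace X] [T2Space X]
    [TopologicalSpace Y] [LocallyCompactSpace Y] [T2Space Y]
    [NormedAddCommGroup E] [NormedSpace ℝ E] [CompleteSpace E]
    [NormedAddCommGroup F] [NormedSpace ℝ F] [CompleteSpace F]
    (φ : Y → X) (hφ : Continuous φ)
    (hproper : ∀ K : Set X, IsCompact K → IsCompact (φ ⁻¹' K))
    (h : Y → (E →L[ℝ] F)) (hbd : ∃ C : ℝ, ∀ y : Y, ‖h y‖ ≤ C)
    (hc : ∀ e : E, Continuous fun y : Y => h y e) :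
    (∀ f : C₀(X, E), ∃ g : C₀(Y, F), ∀ y : Y, g y = h y (f (φ y))) ∧
      ∃ T : C₀(X, E) →L[ℝ] C₀(Y, F),
        ∀ (f : C₀(X, E)) (y : Y), T f y = h y (f (φ y)) := by
  obtain ⟨C, hC⟩ := hbd
  set G : C₀(X, E) → C₀(Y, F) := fun f =>
    { toFun := fun y => h y (f (φ y))
      continuous_toFun := wc_continuous φ hφ h C hC hc f
      zero_at_infty' := wc_zero_at_infty φ hproper h C hC f } with hG
  have hGapp : ∀ f y, G f y = h y (f (φ y)) := fun f y => rfl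
  refine ⟨fun f => ⟨G f, hGapp f⟩, ?_⟩
  have hnorm : ∀ f : C₀(X, E), ‖G f‖ ≤ (max C 0) * ‖f‖ := by
    intro f
    rw [← ZeroAtInftyContinuousMap.norm_toBCF_eq_norm]
    apply BoundedContinuousFunction.norm_le
      (mul_nonneg (le_max_right _ _) (norm_nonneg _)) |>.2
    intro y
    calc ‖h y (f (φ y))‖ ≤ ‖h y‖ * ‖f (φ y)‖ := (h y).le_opNorm _
      _ ≤ (max C 0) * ‖f‖ := by
        apply mul_le_mul ((hC y).trans (le_max_left _ _)) ?_ (norm_nonneg _) (le_max_right _ _)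
        rw [← ZeroAtInftyContinuousMap.norm_toBCF_eq_norm]
        exact BoundedContinuousFunction.norm_coe_le_norm f.toBCF (φ y)
  refine ⟨LinearMap.mkContinuous
    { toFun := G
      map_add' := fun f g => by ext y; simp [hGapp]
      map_smul' := fun c f => by ext y; simp [hGapp] }
    (max C 0) (fun f => hnorm f), fun f y => rfl⟩
end

section
/- Let X and Y be locally compact Hausdorff spaces, let E be a real Banach space, let F be a strictly convex real Banach space, and let T : C₀(X,E) → C₀(Y,F) be a linear isometry. For x ∈ X and a unit functional μ ∈ E*, set S_{x,μ} = {f ∈ C₀(X,E) : μ(f(x)) = ‖f‖ = 1} and Q_{x,μ} = {y ∈ Y : there exists a unit ν ∈ F* with ν((Tf)(y)) = 1 for all f ∈ S_{x,μ}}, and let Q_x be the union of the sets Q_{x,μ} over all unit μ ∈ E* with S_{x,μ} nonempty. Then for x₁ ≠ x₂ in X, the sets Q_{x₁} and Q_{x₂} are disjoint. -/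
/-!
If `y ∈ Q_{x₁} ∩ Q_{x₂}`, take Urysohn bumps `g₁, g₂` with disjoint supports, `g₁` equal at `x₁`
to a value of some `f₁ ∈ S_{x₁,μ₁}` and `g₂` likewise at `x₂`. Then `g₁ + g₂` and `g₁ - g₂` both
lie in `S_{x₁,μ₁}`, so `ν₁` equals `1` at the two points `T(g₁ ± g₂)(y)` of the unit ball of `F`.
By strict convexity they coincide, i.e. `(T g₂)(y) = 0`, contradicting `ν₂((T g₂)(y)) = 1`,
which holds because `g₂ ∈ S_{x₂,μ₂}`.
-/

open ZeroAtInfty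

/-- The set `Q_x`: all `y ∈ Y` lying in `Q_{x,μ}` for some unit functional `μ ∈ E*`
with `S_{x,μ} = {f : μ (f x) = ‖f‖ = 1}` nonempty, where `y ∈ Q_{x,μ}` means that some
unit functional `ν ∈ F*` satisfies `ν ((T f) y) = 1` for all `f ∈ S_{x,μ}`. -/
def Qset {X Y E F : Type*}
    [TopologicalSpace X] [TopologicalSpace Y]
    [NormedAddCommGroup E] [NormedSpace ℝ E]
    [NormedAddCommGroup F] [NormedSpace ℝ F]
    (T : C₀(X, E) →ₗᵢ[ℝ] C₀(Y, F)) (x : X) : Set Y :=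
  {y : Y | ∃ μ : StrongDual ℝ E, ‖μ‖ = 1 ∧
    (∃ f : C₀(X, E), μ (f x) = 1 ∧ ‖f‖ = 1) ∧
    ∃ ν : StrongDual ℝ F, ‖ν‖ = 1 ∧
      ∀ f : C₀(X, E), μ (f x) = 1 → ‖f‖ = 1 → ν (T f y) = 1}

section Dual

variable {F : Type*} [NormedAddCommGroup F] [NormedSpace ℝ F]

theorem one_le_norm_of_apply_eq_one {ν : StrongDual ℝ F} (hν : ‖ν‖ ≤ 1) {w : F}
    (h : ν w = 1) : 1 ≤ ‖w‖ :=
  calc 1 = ‖ν w‖ := by rw [h, norm_one]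
    _ ≤ ‖ν‖ * ‖w‖ := ν.le_opNorm w
    _ ≤ ‖w‖ := mul_le_of_le_one_left (norm_nonneg w) hν

theorem eq_of_apply_eq_one_of_norm_le_one [StrictConvexSpace ℝ F] {ν : StrongDual ℝ F}
    (hν : ‖ν‖ ≤ 1) {w w' : F} (hw : ‖w‖ ≤ 1) (hw' : ‖w'‖ ≤ 1) (h : ν w = 1) (h' : ν w' = 1) :
    w = w' := by
  by_contra hne
  have hmid : ‖(1 / 2 : ℝ) • w + (1 / 2 : ℝ) • w'‖ < 1 :=
    norm_combo_lt_of_ne hw hw' hne (by norm_num) (by norm_num) (by norm_num)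
  have hν_mid : ν ((1 / 2 : ℝ) • w + (1 / 2 : ℝ) • w') = 1 := by
    rw [map_add, map_smul, map_smul, h, h']
    norm_num
  exact hmid.not_ge (one_le_norm_of_apply_eq_one hν hν_mid)

end Dual

namespace ZeroAtInftyContinuousMap

variable {X E : Type*} [TopologicalSpace X] [NormedAddCommGroup E]

theorem norm_apply_le (f : C₀(X, E)) (x : X) : ‖f x‖ ≤ ‖f‖ := by
  rw [← norm_toBCF_eq_norm]
  exact f.toBCF.norm_coe_le_norm x

theorem norm_le_of_forall_norm_apply_le {f : C₀(X, E)} {C : ℝ} (hC : 0 ≤ C)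
    (h : ∀ x, ‖f x‖ ≤ C) : ‖f‖ ≤ C := by
  rw [← norm_toBCF_eq_norm]
  exact (BoundedContinuousFunction.norm_le hC).2 h

theorem norm_add_le_max_of_forall_eq_zero_or {f g : C₀(X, E)}
    (h : ∀ x, f x = 0 ∨ g x = 0) : ‖f + g‖ ≤ max ‖f‖ ‖g‖ :=
  norm_le_of_forall_norm_apply_le (le_max_of_le_left (norm_nonneg f)) fun x => by
    rcases h x with hf | hg
    · simpa [hf] using le_max_of_le_right (g.norm_apply_le x)
    · simpa [hg] using le_max_of_le_left (f.norm_apply_le x)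

theorem norm_eq_one_of_apply_eq_one [NormedSpace ℝ E] {μ : StrongDual ℝ E} (hμ : ‖μ‖ ≤ 1)
    {f : C₀(X, E)} (hf : ‖f‖ ≤ 1) {x : X} (h : μ (f x) = 1) : ‖f‖ = 1 :=
  hf.antisymm ((one_le_norm_of_apply_eq_one hμ h).trans (f.norm_apply_le x))

theorem exists_apply_eq_of_isOpen [LocallyCompactSpace X] [T2Space X] [NormedSpace ℝ E]
    {U : Set X} (hU : IsOpen U) {x : X} (hx : x ∈ U) (e : E) :
    ∃ g : C₀(X, E), g x = e ∧ ‖g‖ ≤ ‖e‖ ∧ ∀ y ∉ U, g y = 0 := by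
  obtain ⟨φ, hφx, hφU, hφc, hφI⟩ := exists_continuous_one_zero_of_isCompact isCompact_singleton
    hU.isClosed_compl (Set.disjoint_singleton_left.2 (Set.notMem_compl_iff.2 hx))
  refine ⟨⟨⟨fun y => φ y • e, by fun_prop⟩, (hφc.smul_right (f' := fun _ => e)).is_zero_at_infty⟩,
    by simp [hφx rfl], norm_le_of_forall_norm_apply_le (norm_nonneg e) fun y => ?_,
    fun y hy => by simp [hφU hy]⟩
  change ‖φ y • e‖ ≤ ‖e‖
  rw [norm_smul, Real.norm_of_nonneg (hφI y).1]
  exact mul_le_of_le_one_left (norm_nonneg e) (hφI y).2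

theorem exists_separating_pair [LocallyCompactSpace X] [T2Space X] [NormedSpace ℝ E]
    {x₁ x₂ : X} (hx : x₁ ≠ x₂) {e₁ e₂ : E} (he₁ : ‖e₁‖ ≤ 1) (he₂ : ‖e₂‖ ≤ 1) :
    ∃ g₁ g₂ : C₀(X, E), g₁ x₁ = e₁ ∧ g₂ x₂ = e₂ ∧ g₂ x₁ = 0 ∧ ‖g₂‖ ≤ 1 ∧
      ‖g₁ + g₂‖ ≤ 1 ∧ ‖g₁ - g₂‖ ≤ 1 := by
  obtain ⟨U₁, U₂, hU₁, hU₂, hx₁, hx₂, hU⟩ := t2_separation hx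
  obtain ⟨g₁, hg₁x₁, hg₁, hg₁U⟩ := exists_apply_eq_of_isOpen hU₁ hx₁ e₁
  obtain ⟨g₂, hg₂x₂, hg₂, hg₂U⟩ := exists_apply_eq_of_isOpen hU₂ hx₂ e₂
  have hg₁_le : ‖g₁‖ ≤ 1 := hg₁.trans he₁
  have hg₂_le : ‖g₂‖ ≤ 1 := hg₂.trans he₂
  have hsupp : ∀ g : C₀(X, E), ‖g‖ ≤ 1 → (∀ x ∉ U₂, g x = 0) → ‖g₁ + g‖ ≤ 1 := by
    intro g hg hgU
    refine (norm_add_le_max_of_forall_eq_zero_or fun x => ?_).trans (max_le hg₁_le hg)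
    by_cases hxU : x ∈ U₁
    · exact .inr (hgU x (Set.disjoint_left.1 hU hxU))
    · exact .inl (hg₁U x hxU)
  refine ⟨g₁, g₂, hg₁x₁, hg₂x₂, hg₂U x₁ (Set.disjoint_left.1 hU hx₁), hg₂_le,
    hsupp g₂ hg₂_le hg₂U, ?_⟩
  rw [sub_eq_add_neg]
  exact hsupp (-g₂) (by rwa [norm_neg]) fun x hx => by simp [hg₂U x hx]

end ZeroAtInftyContinuousMap

open ZeroAtInftyContinuousMap in
theorem Qset_disjoint_general {X Y E F : Type*}
    [TopologicalSpace X] [LocallyCompactSpace X] [T2Space X]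
    [TopologicalSpace Y]
    [NormedAddCommGroup E] [NormedSpace ℝ E]
    [NormedAddCommGroup F] [NormedSpace ℝ F]
    (hF : ∀ x y : F, x ≠ y → ‖x‖ = 1 → ‖y‖ = 1 → ‖x + y‖ < 2)
    (T : C₀(X, E) →ₗᵢ[ℝ] C₀(Y, F))
    (x₁ x₂ : X) (hx : x₁ ≠ x₂) :
    Disjoint (Qset T x₁) (Qset T x₂) := by
  have : StrictConvexSpace ℝ F :=
    .of_norm_add_ne_two fun x y hx hy hne => (hF x y hne hx hy).ne
  rw [Set.disjoint_left]
  rintro y ⟨μ₁, hμ₁, ⟨f₁, hf₁, hf₁n⟩, ν₁, hν₁, hT₁⟩ ⟨μ₂, hμ₂, ⟨f₂, hf₂, hf₂n⟩, ν₂, -, hT₂⟩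
  obtain ⟨g₁, g₂, hg₁x₁, hg₂x₂, hg₂x₁, hg₂, hadd, hsub⟩ := exists_separating_pair hx
    ((f₁.norm_apply_le x₁).trans hf₁n.le) ((f₂.norm_apply_le x₂).trans hf₂n.le)
  have hS₁ : ∀ g : C₀(X, E), ‖g‖ ≤ 1 → μ₁ (g x₁) = 1 →
      ‖T g y‖ ≤ 1 ∧ ν₁ (T g y) = 1 := fun g hg hgx =>
    ⟨(norm_apply_le _ y).trans ((T.norm_map g).trans_le hg),
      hT₁ g hgx (norm_eq_one_of_apply_eq_one hμ₁.le hg hgx)⟩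
  obtain ⟨hw, hνw⟩ := hS₁ (g₁ + g₂) hadd (by simpa [hg₁x₁, hg₂x₁] using hf₁)
  obtain ⟨hw', hνw'⟩ := hS₁ (g₁ - g₂) hsub (by simpa [hg₁x₁, hg₂x₁] using hf₁)
  have hflip : T g₂ y = -T g₂ y := by
    simpa only [sub_eq_add_neg, map_add, map_neg, ZeroAtInftyContinuousMap.add_apply,
      ZeroAtInftyContinuousMap.neg_apply, add_right_inj]
      using eq_of_apply_eq_one_of_norm_le_one hν₁.le hw hw' hνw hνw'
  have hνTg₂ : ν₂ (T g₂ y) = 1 :=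
    hT₂ g₂ (by rwa [hg₂x₂]) (norm_eq_one_of_apply_eq_one hμ₂.le hg₂ (by rwa [hg₂x₂]))
  have := congrArg ν₂ hflip
  rw [map_neg, hνTg₂] at this
  norm_num at this

/-- If `F` is strictly convex and `T : C₀(X, E) → C₀(Y, F)` is a linear isometry, then the
sets `Q_{x₁}` and `Q_{x₂}` are disjoint whenever `x₁ ≠ x₂`. -/
theorem Qset_disjoint {X Y E F : Type*}
    [TopologicalSpace X] [LocallyCompactSpace X] [T2Space X]
    [TopologicalSpace Y] [LocallyCompactSpace Y] [T2Space Y]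
    [NormedAddCommGroup E] [NormedSpace ℝ E] [CompleteSpace E]
    [NormedAddCommGroup F] [NormedSpace ℝ F] [CompleteSpace F]
    (hF : ∀ x y : F, x ≠ y → ‖x‖ = 1 → ‖y‖ = 1 → ‖x + y‖ < 2)
    (T : C₀(X, E) →ₗᵢ[ℝ] C₀(Y, F))
    (x₁ x₂ : X) (hx : x₁ ≠ x₂) :
    Disjoint (Qset T x₁) (Qset T x₂) :=
  Qset_disjoint_general hF T x₁ x₂ hx
end

section
/- Let E be a real Banach space. If E is strictly convex, or if the dual space E* is strictly convex, then E is non-square. -/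
/-! If `‖x + y‖ = ‖x - y‖ = 2` for unit vectors `x, y`, Hahn–Banach gives norm-one functionals
`μ, ν` norming `x + y` and `x - y`. Then `μ x = μ y = 1` and `ν x = -ν y = 1`, so `μ ≠ ν`, while
`(μ + ν) x = 2` forces `‖μ + ν‖ = 2`: the dual is not strictly convex. -/

section

variable {E : Type*} [NormedAddCommGroup E] [NormedSpace ℝ E]

lemma StrongDual.apply_le_one {μ : StrongDual ℝ E} {x : E} (hμ : ‖μ‖ ≤ 1) (hx : ‖x‖ ≤ 1) :
    μ x ≤ 1 :=
  calc μ x ≤ ‖μ x‖ := le_abs_self _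
    _ ≤ ‖μ‖ * ‖x‖ := μ.le_opNorm x
    _ ≤ 1 := mul_le_one₀ hμ (norm_nonneg x) hx

lemma StrongDual.apply_eq_one_of_apply_add_eq_two {μ : StrongDual ℝ E} {x y : E}
    (hμ : ‖μ‖ ≤ 1) (hx : ‖x‖ ≤ 1) (hy : ‖y‖ ≤ 1) (h : μ (x + y) = 2) :
    μ x = 1 ∧ μ y = 1 := by
  have hμx := StrongDual.apply_le_one hμ hx
  have hμy := StrongDual.apply_le_one hμ hy
  rw [map_add] at h
  constructor <;> linarith

lemma exists_strongDual_ne_two_le_norm_add {x y : E} (hx : ‖x‖ = 1) (hy : ‖y‖ = 1)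
    (hadd : ‖x + y‖ = 2) (hsub : ‖x - y‖ = 2) :
    ∃ μ ν : StrongDual ℝ E, μ ≠ ν ∧ ‖μ‖ = 1 ∧ ‖ν‖ = 1 ∧ 2 ≤ ‖μ + ν‖ := by
  have hy' : ‖-y‖ ≤ 1 := by rw [norm_neg, hy]
  obtain ⟨μ, hμ, hμv⟩ := exists_dual_vector ℝ (x + y) (by rw [hadd]; norm_num)
  obtain ⟨ν, hν, hνv⟩ := exists_dual_vector ℝ (x - y) (by rw [hsub]; norm_num)
  obtain ⟨hμx, hμy⟩ := StrongDual.apply_eq_one_of_apply_add_eq_two hμ.le hx.le hy.le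
    (hμv.trans hadd)
  obtain ⟨hνx, hνy⟩ := StrongDual.apply_eq_one_of_apply_add_eq_two hν.le hx.le hy'
    (by rw [← sub_eq_add_neg, hνv, hsub]; rfl)
  refine ⟨μ, ν, fun hμν => ?_, hμ, hν, ?_⟩
  · rw [map_neg, ← hμν, hμy] at hνy
    norm_num at hνy
  · calc (2 : ℝ) = ‖(μ + ν) x‖ := by rw [add_apply, hμx, hνx]; norm_num
      _ ≤ ‖μ + ν‖ * ‖x‖ := (μ + ν).le_opNorm x
      _ = ‖μ + ν‖ := by rw [hx, mul_one]

end

theorem nonsquare_of_strictly_convex_or_dual_strictly_convex_general {E : Type*}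
    [NormedAddCommGroup E] [NormedSpace ℝ E]
    (h : (∀ x y : E, x ≠ y → ‖x‖ = 1 → ‖y‖ = 1 → ‖x + y‖ < 2) ∨
      (∀ μ ν : StrongDual ℝ E, μ ≠ ν → ‖μ‖ = 1 → ‖ν‖ = 1 → ‖μ + ν‖ < 2)) :
    ∀ x y : E, ‖x‖ = 1 → ‖y‖ = 1 → ‖x + y‖ < 2 ∨ ‖x - y‖ < 2 := by
  intro x y hx hy
  rcases h with hE | hdual
  · by_cases hxy : x = y
    · right
      simp [hxy]
    · exact Or.inl (hE x y hxy hx hy)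
  · by_contra! hsquare
    have hadd : ‖x + y‖ = 2 :=
      le_antisymm ((norm_add_le x y).trans_eq (by rw [hx, hy]; norm_num)) hsquare.1
    have hsub : ‖x - y‖ = 2 :=
      le_antisymm ((norm_sub_le x y).trans_eq (by rw [hx, hy]; norm_num)) hsquare.2
    obtain ⟨μ, ν, hμν, hμ, hν, h2⟩ := exists_strongDual_ne_two_le_norm_add hx hy hadd hsub
    exact (hdual μ ν hμν hμ hν).not_ge h2

/-- If a real Banach space `E` is strictly convex, or its dual `E*` is strictly convex,
then `E` is non-square: for all unit vectors `x, y`, at least one of `‖x + y‖` and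
`‖x - y‖` is strictly less than `2`. -/
theorem nonsquare_of_strictly_convex_or_dual_strictly_convex {E : Type*}
    [NormedAddCommGroup E] [NormedSpace ℝ E] [CompleteSpace E]
    (h : (∀ x y : E, x ≠ y → ‖x‖ = 1 → ‖y‖ = 1 → ‖x + y‖ < 2) ∨
      (∀ μ ν : StrongDual ℝ E, μ ≠ ν → ‖μ‖ = 1 → ‖ν‖ = 1 → ‖μ + ν‖ < 2)) :
    ∀ x y : E, ‖x‖ = 1 → ‖y‖ = 1 → ‖x + y‖ < 2 ∨ ‖x - y‖ < 2 :=
  nonsquare_of_strictly_convex_or_dual_strictly_convex_general h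
end

section
/- For θ ∈ [0, 2π], let u_θ = (cos θ, sin θ) ∈ ℝ² (with the Euclidean norm) and let P_θ : ℝ² → ℝ² be the orthogonal projection onto the span of u_θ, P_θ(v) = ⟨v, u_θ⟩ u_θ. Then: (1) the map T sending v ∈ ℝ² to the continuous function θ ↦ P_θ(v) on the compact interval [0, 2π] is a linear map from ℝ² into C([0,2π], ℝ²) satisfying sup_{θ∈[0,2π]} ‖P_θ(v)‖ = ‖v‖ for every v ∈ ℝ², i.e., T is a linear isometry into C([0,2π], ℝ²); and (2) for every θ ∈ [0,2π], the map P_θ is not an isometry (indeed P_θ annihilates the nonzero vector (−sin θ, cos θ)). -/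
open Real

/-- The unit vector `u_θ = (cos θ, sin θ)` in the Euclidean plane. -/
noncomputable def unitVec (θ : ℝ) : EuclideanSpace ℝ (Fin 2) :=
  (WithLp.equiv 2 (Fin 2 → ℝ)).symm ![Real.cos θ, Real.sin θ]

/-- The orthogonal projection `P_θ` of the Euclidean plane onto the span of `u_θ`. -/
noncomputable def proj (θ : ℝ) (v : EuclideanSpace ℝ (Fin 2)) : EuclideanSpace ℝ (Fin 2) :=
  (inner ℝ v (unitVec θ) : ℝ) • unitVec θ

/-!
`‖P_θ v‖ = |⟪v, u_θ⟫| ≤ ‖v‖` by Cauchy–Schwarz, with equality when `u_θ` points along `v`.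
Polar coordinates write `v = ‖v‖ u_θ`, and `2π`-periodicity of `θ ↦ u_θ` moves `θ` into
`[0, 2π)`, so the supremum is attained. Since `⟪u_a, u_b⟫ = cos (a - b)`, `P_θ` kills the unit
vector `u_{θ + π/2} = (-sin θ, cos θ)`.
-/

local notation "E²" => EuclideanSpace ℝ (Fin 2)

lemma inner_unitVec_unitVec (a b : ℝ) : inner ℝ (unitVec a) (unitVec b) = cos (a - b) := by
  simp only [unitVec, WithLp.equiv_symm_apply, PiLp.inner_apply, RCLike.inner_apply,
    ringHom_apply, Fin.sum_univ_two, Fin.isValue, Matrix.cons_val_zero, Matrix.cons_val_one,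
    Matrix.cons_val_fin_one, cos_sub]
  ring

lemma norm_unitVec (θ : ℝ) : ‖unitVec θ‖ = 1 := by
  rw [norm_eq_sqrt_real_inner, inner_unitVec_unitVec, sub_self, cos_zero, sqrt_one]

lemma periodic_unitVec : Function.Periodic unitVec (2 * π) := fun θ => by
  simp [unitVec]

lemma continuous_unitVec : Continuous unitVec :=
  (PiLp.continuous_toLp 2 _).comp <| continuous_pi fun i => by
    fin_cases i
    exacts [continuous_cos, continuous_sin]

lemma exists_eq_norm_smul_unitVec (v : E²) : ∃ θ, v = ‖v‖ • unitVec θ := by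
  set z := Complex.orthonormalBasisOneI.repr.symm v
  have hz : ‖z‖ = ‖v‖ := LinearIsometryEquiv.norm_map _ v
  refine ⟨z.arg, ?_⟩
  ext i
  fin_cases i
  · simp [unitVec, ← hz, Complex.norm_mul_cos_arg, z]
  · simp [unitVec, ← hz, Complex.norm_mul_sin_arg, z]

lemma norm_proj (θ : ℝ) (v : E²) : ‖proj θ v‖ = |inner ℝ v (unitVec θ)| := by
  rw [proj, norm_smul, norm_unitVec, mul_one, Real.norm_eq_abs]

lemma norm_proj_le (θ : ℝ) (v : E²) : ‖proj θ v‖ ≤ ‖v‖ := by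
  simpa [norm_proj, norm_unitVec] using abs_real_inner_le_norm v (unitVec θ)

lemma exists_norm_proj_eq (v : E²) : ∃ θ ∈ Set.Ico 0 (2 * π), ‖proj θ v‖ = ‖v‖ := by
  obtain ⟨θ, hθ⟩ := exists_eq_norm_smul_unitVec v
  obtain ⟨θ', hθ', hper⟩ := periodic_unitVec.exists_mem_Ico₀ two_pi_pos θ
  refine ⟨θ', hθ', ?_⟩
  rw [norm_proj, ← hper]
  nth_rw 1 [hθ]
  rw [real_inner_smul_left, inner_unitVec_unitVec, sub_self, cos_zero, mul_one, abs_norm]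

lemma iSup_norm_proj (v : E²) :
    ⨆ θ : Set.Icc (0 : ℝ) (2 * π), ‖proj θ v‖ = ‖v‖ := by
  obtain ⟨θ, hθ, hmax⟩ := exists_norm_proj_eq v
  have : Nonempty (Set.Icc (0 : ℝ) (2 * π)) := ⟨⟨θ, Set.Ico_subset_Icc_self hθ⟩⟩
  refine le_antisymm (ciSup_le fun θ => norm_proj_le θ v) ?_
  rw [← hmax]
  exact le_ciSup (f := fun θ : Set.Icc (0 : ℝ) (2 * π) => ‖proj θ v‖)
    ⟨‖v‖, Set.forall_mem_range.2 fun θ => norm_proj_le θ v⟩ ⟨θ, Set.Ico_subset_Icc_self hθ⟩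

lemma proj_unitVec_add_pi_div_two (θ : ℝ) : proj θ (unitVec (θ + π / 2)) = 0 := by
  rw [proj, inner_unitVec_unitVec, add_sub_cancel_left, cos_pi_div_two, zero_smul]

lemma continuous_proj_left (v : E²) : Continuous fun θ => proj θ v :=
  (continuous_const.inner (𝕜 := ℝ) continuous_unitVec).smul continuous_unitVec

noncomputable def projSection : E² →ₗ[ℝ] C(Set.Icc (0 : ℝ) (2 * π), E²) where
  toFun v := ⟨fun θ => proj θ v, (continuous_proj_left v).comp continuous_subtype_val⟩
  map_add' v w := by ext; simp [proj, inner_add_left, add_smul]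
  map_smul' c v := by ext; simp [proj, real_inner_smul_left, smul_smul]

noncomputable def projSectionIsometry : E² →ₗᵢ[ℝ] C(Set.Icc (0 : ℝ) (2 * π), E²) :=
  ⟨projSection, fun v => by
    rw [ContinuousMap.norm_eq_iSup_norm]
    exact iSup_norm_proj v⟩

/-- Example 3.2: `v ↦ (θ ↦ P_θ v)` is a linear isometry from the Euclidean plane into
`C([0, 2π], ℝ²)` (in particular `sup_θ ‖P_θ v‖ = ‖v‖`), yet no single `P_θ` is an
isometry, since `P_θ` annihilates the nonzero vector `(-sin θ, cos θ)`. -/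
theorem projection_field_into_isometry :
    (∃ T : EuclideanSpace ℝ (Fin 2) →ₗᵢ[ℝ]
        C(Set.Icc (0 : ℝ) (2 * Real.pi), EuclideanSpace ℝ (Fin 2)),
      ∀ (v : EuclideanSpace ℝ (Fin 2)) (θ : Set.Icc (0 : ℝ) (2 * Real.pi)),
        T v θ = proj (θ : ℝ) v) ∧
    (∀ v : EuclideanSpace ℝ (Fin 2),
      (⨆ θ : Set.Icc (0 : ℝ) (2 * Real.pi), ‖proj (θ : ℝ) v‖) = ‖v‖) ∧
    (∀ θ : Set.Icc (0 : ℝ) (2 * Real.pi),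
      ((WithLp.equiv 2 (Fin 2 → ℝ)).symm ![-Real.sin (θ : ℝ), Real.cos (θ : ℝ)] ≠ 0 ∧
        proj (θ : ℝ) ((WithLp.equiv 2 (Fin 2 → ℝ)).symm
          ![-Real.sin (θ : ℝ), Real.cos (θ : ℝ)]) = 0) ∧
      ¬ ∀ v : EuclideanSpace ℝ (Fin 2), ‖proj (θ : ℝ) v‖ = ‖v‖) := by
  refine ⟨⟨projSectionIsometry, fun _ _ => rfl⟩, iSup_norm_proj, fun θ => ?_⟩
  have hw : (WithLp.equiv 2 (Fin 2 → ℝ)).symm ![-sin (θ : ℝ), cos (θ : ℝ)] =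
      unitVec (θ + π / 2) := by
    rw [unitVec, cos_add_pi_div_two, sin_add_pi_div_two]
  have hw0 : unitVec (θ + π / 2) ≠ 0 := norm_ne_zero_iff.1 (by simp [norm_unitVec])
  rw [hw]
  refine ⟨⟨hw0, proj_unitVec_add_pi_div_two θ⟩, fun hiso => ?_⟩
  simpa [proj_unitVec_add_pi_div_two, norm_unitVec] using hiso (unitVec (θ + π / 2))
end
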